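/- Let Y, A₂ ⊆ ℂ be open, let b : A₂ → Y be holomorphic with b'(w) ≠ 0 for all w ∈ A₂, and let ρ : Y → ℝ be positive and continuously differentiable. Define ρ₁ : A₂ → ℝ by ρ₁(w) = ρ(b(w))·|b'(w)|. Let A₁ ⊆ ℂ be open and let f : A₁ → A₂ be twice continuously differentiable (in the real sense). Then f is ρ₁-harmonic on A₁ if and only if b ∘ f is ρ-harmonic on A₁. -/

import Mathlib

/-!
For holomorphic `b` the chain rule gives `(b ∘ f)_z = b'(f) f_z`, `(b ∘ f)_{z̄} = b'(f) f_{z̄}`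
and `(b ∘ f)_{z z̄} = b'(f) f_{z z̄} + b''(f) f_z f_{z̄}`, while `|b'|_w = conj b' · b'' / (2 |b'|)`
makes the logarithmic Wirtinger derivative of `ρ₁ = (ρ ∘ b) |b'|` equal to
`(ρ_w / ρ)(b) · b' + b'' / (2 b')`. Substituting, the `ρ`-tension of `b ∘ f` is `b'(f)` times
the `ρ₁`-tension of `f`, and `b'` has no zeros.
-/

/-- Wirtinger derivative `f_z` of a map `f : ℂ → ℂ`, computed from the real
Fréchet derivative `L = Df(z)` as `(L(1) − i·L(i))/2`. -/
noncomputable def wirtingerZ (f : ℂ → ℂ) (z : ℂ) : ℂ :=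
  ((fderiv ℝ f z) 1 - Complex.I * (fderiv ℝ f z) Complex.I) / 2

/-- Wirtinger derivative `f_{z̄}` of a map `f : ℂ → ℂ`, computed from the real
Fréchet derivative `L = Df(z)` as `(L(1) + i·L(i))/2`. -/
noncomputable def wirtingerZbar (f : ℂ → ℂ) (z : ℂ) : ℂ :=
  ((fderiv ℝ f z) 1 + Complex.I * (fderiv ℝ f z) Complex.I) / 2

/-- A map `f` is `ρ`-harmonic on `V` if it satisfies the Euler–Lagrange equation
`f_{z z̄} + 2·((∂_w ρ)(f(z))/ρ(f(z)))·f_z·f_{z̄} = 0` on `V`, where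
`∂_w ρ` is the Wirtinger derivative of `ρ` regarded as a map `ℂ → ℂ`. -/
def IsRhoHarmonicOn (ρ : ℂ → ℝ) (f : ℂ → ℂ) (V : Set ℂ) : Prop :=
  ∀ z ∈ V,
    wirtingerZbar (fun w => wirtingerZ f w) z +
        2 * (wirtingerZ (fun w => ((ρ w : ℝ) : ℂ)) (f z) / ((ρ (f z) : ℝ) : ℂ)) *
          wirtingerZ f z * wirtingerZbar f z = 0

open Complex ComplexConjugate Filter Topology

section Wirtinger

variable {f g : ℂ → ℂ} {z : ℂ}

theorem HasFDerivAt.wirtingerZ_eq {L : ℂ →L[ℝ] ℂ} (h : HasFDerivAt f L z) :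
    wirtingerZ f z = (L 1 - I * L I) / 2 := by
  rw [wirtingerZ, h.fderiv]

theorem HasFDerivAt.wirtingerZbar_eq {L : ℂ →L[ℝ] ℂ} (h : HasFDerivAt f L z) :
    wirtingerZbar f z = (L 1 + I * L I) / 2 := by
  rw [wirtingerZbar, h.fderiv]

theorem Filter.EventuallyEq.wirtingerZ_eq (h : f =ᶠ[𝓝 z] g) :
    wirtingerZ f z = wirtingerZ g z := by
  rw [wirtingerZ, wirtingerZ, h.fderiv_eq]

theorem Filter.EventuallyEq.wirtingerZbar_eq (h : f =ᶠ[𝓝 z] g) :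
    wirtingerZbar f z = wirtingerZbar g z := by
  rw [wirtingerZbar, wirtingerZbar, h.fderiv_eq]

theorem fderiv_apply_eq_wirtinger (v : ℂ) :
    fderiv ℝ f z v = wirtingerZ f z * v + wirtingerZbar f z * conj v := by
  set L := fderiv ℝ f z
  have hv : L v = v.re * L 1 + v.im * L I := by
    conv_lhs => rw [← re_add_im v, ← mul_one (v.re : ℂ), ← real_smul, ← real_smul]
    rw [map_add, map_smul, map_smul, real_smul, real_smul]
  have hconj : conj v = v.re - v.im * I := by
    apply Complex.ext <;> simp
  rw [hv, wirtingerZ, wirtingerZbar, hconj]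
  linear_combination ((v.im : ℂ) * L I) * I_sq + (L 1 - I * L I) / 2 * re_add_im v

theorem wirtingerZ_id : wirtingerZ (fun w => w) z = 1 := by
  rw [HasFDerivAt.wirtingerZ_eq (f := fun w => w) (hasFDerivAt_id z)]
  simp only [ContinuousLinearMap.coe_id', id_eq, I_mul_I]
  norm_num

theorem wirtingerZ_conj : wirtingerZ (fun w => conj w) z = 0 := by
  rw [HasFDerivAt.wirtingerZ_eq (f := fun w => conj w) conjCLE.hasFDerivAt]
  simp only [ContinuousLinearEquiv.coe_coe, conjCLE_apply, map_one, conj_I, mul_neg, I_mul_I]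
  norm_num

theorem wirtingerZ_mul {u v : ℂ → ℂ} (hu : DifferentiableAt ℝ u z)
    (hv : DifferentiableAt ℝ v z) :
    wirtingerZ (fun w => u w * v w) z = u z * wirtingerZ v z + wirtingerZ u z * v z := by
  rw [wirtingerZ, fderiv_fun_mul hu hv, wirtingerZ, wirtingerZ]
  simp only [add_apply, smul_apply, smul_eq_mul]
  ring

theorem wirtingerZbar_mul {u v : ℂ → ℂ} (hu : DifferentiableAt ℝ u z)
    (hv : DifferentiableAt ℝ v z) :
    wirtingerZbar (fun w => u w * v w) z =
      u z * wirtingerZbar v z + wirtingerZbar u z * v z := by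
  rw [wirtingerZbar, fderiv_fun_mul hu hv, wirtingerZbar, wirtingerZbar]
  simp only [add_apply, smul_apply, smul_eq_mul]
  ring

theorem HasDerivAt.wirtingerZ_comp {b : ℂ → ℂ} {b' : ℂ} (hb : HasDerivAt b b' (g z))
    (hg : DifferentiableAt ℝ g z) :
    wirtingerZ (fun w => b (g w)) z = b' * wirtingerZ g z := by
  rw [HasFDerivAt.wirtingerZ_eq (f := fun w => b (g w))
    ((hb.hasFDerivAt.restrictScalars ℝ).comp z hg.hasFDerivAt), wirtingerZ]
  simp only [ContinuousLinearMap.comp_apply, ContinuousLinearMap.coe_restrictScalars',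
    ContinuousLinearMap.toSpanSingleton_apply, smul_eq_mul]
  ring

theorem HasDerivAt.wirtingerZbar_comp {b : ℂ → ℂ} {b' : ℂ} (hb : HasDerivAt b b' (g z))
    (hg : DifferentiableAt ℝ g z) :
    wirtingerZbar (fun w => b (g w)) z = b' * wirtingerZbar g z := by
  rw [HasFDerivAt.wirtingerZbar_eq (f := fun w => b (g w))
    ((hb.hasFDerivAt.restrictScalars ℝ).comp z hg.hasFDerivAt), wirtingerZbar]
  simp only [ContinuousLinearMap.comp_apply, ContinuousLinearMap.coe_restrictScalars',
    ContinuousLinearMap.toSpanSingleton_apply, smul_eq_mul]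
  ring

theorem wirtingerZ_comp_of_hasDerivAt {h : ℂ → ℂ} {h' : ℂ} (hg : DifferentiableAt ℝ g (h z))
    (hh : HasDerivAt h h' z) :
    wirtingerZ (fun w => g (h w)) z = wirtingerZ g (h z) * h' := by
  rw [HasFDerivAt.wirtingerZ_eq (f := fun w => g (h w))
    (hg.hasFDerivAt.comp z (hh.hasFDerivAt.restrictScalars ℝ))]
  simp only [ContinuousLinearMap.comp_apply, ContinuousLinearMap.coe_restrictScalars',
    ContinuousLinearMap.toSpanSingleton_apply, smul_eq_mul, one_mul]
  rw [fderiv_apply_eq_wirtinger, fderiv_apply_eq_wirtinger, map_mul, conj_I]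
  linear_combination (wirtingerZbar g (h z) * conj h' / 2 - wirtingerZ g (h z) * h' / 2) * I_sq

theorem wirtingerZ_ofReal_norm {a : ℂ} (ha : a ≠ 0) :
    wirtingerZ (fun w => ((‖w‖ : ℝ) : ℂ)) a = conj a / (2 * ‖a‖) := by
  have hn : DifferentiableAt ℝ (fun w : ℂ => ((‖w‖ : ℝ) : ℂ)) a :=
    ofRealCLM.differentiableAt.comp a ((contDiffAt_norm ℂ ha).differentiableAt one_ne_zero)
  have hsq : (fun w : ℂ => ((‖w‖ : ℝ) : ℂ) * ((‖w‖ : ℝ) : ℂ)) = fun w => w * conj w := by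
    funext w
    rw [mul_conj, normSq_eq_norm_sq]
    push_cast
    ring
  have key := congrArg (wirtingerZ · a) hsq
  rw [wirtingerZ_mul hn hn, wirtingerZ_mul (u := fun w => w) (v := fun w => conj w)
    differentiableAt_id conjCLE.differentiableAt, wirtingerZ_id, wirtingerZ_conj] at key
  have ha' : ((‖a‖ : ℝ) : ℂ) ≠ 0 := by exact_mod_cast norm_ne_zero_iff.2 ha
  field_simp
  linear_combination key

theorem ContDiffAt.differentiableAt_wirtingerZ (hf : ContDiffAt ℝ 2 f z) :
    DifferentiableAt ℝ (wirtingerZ f) z := by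
  have hD : DifferentiableAt ℝ (fderiv ℝ f) z :=
    (hf.fderiv_right (m := 1) le_rfl).differentiableAt one_ne_zero
  have happly (v : ℂ) : DifferentiableAt ℝ (fun w => fderiv ℝ f w v) z :=
    (ContinuousLinearMap.apply ℝ ℂ v).differentiableAt.comp z hD
  show DifferentiableAt ℝ (fun w => (fderiv ℝ f w 1 - I * fderiv ℝ f w I) / 2) z
  simp only [div_eq_mul_inv]
  exact ((happly 1).fun_sub ((happly I).const_mul I)).mul_const _

theorem wirtingerZbar_wirtingerZ_comp {b : ℂ → ℂ} (hb : AnalyticAt ℂ b (f z))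
    (hf : ContDiffAt ℝ 2 f z) :
    wirtingerZbar (wirtingerZ (b ∘ f)) z =
      deriv b (f z) * wirtingerZbar (wirtingerZ f) z +
        deriv (deriv b) (f z) * wirtingerZ f z * wirtingerZbar f z := by
  have hfd : DifferentiableAt ℝ f z := hf.differentiableAt two_ne_zero
  have hfirst : wirtingerZ (b ∘ f) =ᶠ[𝓝 z] fun w => deriv b (f w) * wirtingerZ f w := by
    filter_upwards [hf.eventually (by simp), hfd.continuousAt.eventually hb.eventually_analyticAt]
      with w hfw hbw
    exact hbw.differentiableAt.hasDerivAt.wirtingerZ_comp (hfw.differentiableAt two_ne_zero)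
  have hb'' : HasDerivAt (deriv b) (deriv (deriv b) (f z)) (f z) :=
    hb.deriv.differentiableAt.hasDerivAt
  rw [hfirst.wirtingerZbar_eq,
    wirtingerZbar_mul (u := fun w => deriv b (f w))
      ((hb''.differentiableAt.restrictScalars ℝ).comp z hfd) hf.differentiableAt_wirtingerZ,
    hb''.wirtingerZbar_comp hfd]
  ring

theorem wirtingerZ_pullback_weight_div {b : ℂ → ℂ} {ρ : ℂ → ℝ} {w : ℂ} (hb : AnalyticAt ℂ b w)
    (hb' : deriv b w ≠ 0) (hρ : DifferentiableAt ℝ ρ (b w)) (hρ0 : ρ (b w) ≠ 0) :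
    wirtingerZ (fun v => ((ρ (b v) * ‖deriv b v‖ : ℝ) : ℂ)) w / ((ρ (b w) * ‖deriv b w‖ : ℝ) : ℂ) =
      wirtingerZ (fun v => (ρ v : ℂ)) (b w) / ρ (b w) * deriv b w +
        deriv (deriv b) w / (2 * deriv b w) := by
  have hρc : DifferentiableAt ℝ (fun v => (ρ v : ℂ)) (b w) :=
    ofRealCLM.differentiableAt.comp _ hρ
  have hnorm : DifferentiableAt ℝ (fun v : ℂ => ((‖v‖ : ℝ) : ℂ)) (deriv b w) :=
    ofRealCLM.differentiableAt.comp _ ((contDiffAt_norm ℂ hb').differentiableAt one_ne_zero)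
  have hbd : HasDerivAt b (deriv b w) w := hb.differentiableAt.hasDerivAt
  have hb''d : HasDerivAt (deriv b) (deriv (deriv b) w) w :=
    hb.deriv.differentiableAt.hasDerivAt
  have hmul := wirtingerZ_mul (z := w) (u := fun v => (ρ (b v) : ℂ))
    (v := fun v => ((‖deriv b v‖ : ℝ) : ℂ))
    (hρc.comp w (hbd.differentiableAt.restrictScalars ℝ))
    (hnorm.comp w (hb''d.differentiableAt.restrictScalars ℝ))
  rw [wirtingerZ_comp_of_hasDerivAt hρc hbd, wirtingerZ_comp_of_hasDerivAt hnorm hb''d,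
    wirtingerZ_ofReal_norm hb'] at hmul
  have hB : ((‖deriv b w‖ : ℝ) : ℂ) ≠ 0 := by exact_mod_cast norm_ne_zero_iff.2 hb'
  have hρ0' : (ρ (b w) : ℂ) ≠ 0 := by exact_mod_cast hρ0
  have hconj : conj (deriv b w) * deriv b w = ((‖deriv b w‖ : ℝ) : ℂ) ^ 2 := by
    rw [mul_comm, mul_conj, normSq_eq_norm_sq]; push_cast; rfl
  push_cast
  rw [hmul]
  field_simp
  linear_combination (ρ (b w) : ℂ) * deriv (deriv b) w * hconj

end Wirtinger

noncomputable def rhoTension (ρ : ℂ → ℝ) (f : ℂ → ℂ) (z : ℂ) : ℂ :=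
  wirtingerZbar (fun w => wirtingerZ f w) z +
    2 * (wirtingerZ (fun w => ((ρ w : ℝ) : ℂ)) (f z) / ((ρ (f z) : ℝ) : ℂ)) *
      wirtingerZ f z * wirtingerZbar f z

theorem isRhoHarmonicOn_iff_rhoTension {ρ : ℂ → ℝ} {f : ℂ → ℂ} {V : Set ℂ} :
    IsRhoHarmonicOn ρ f V ↔ ∀ z ∈ V, rhoTension ρ f z = 0 :=
  Iff.rfl

theorem rhoTension_comp {b f : ℂ → ℂ} {ρ ρ₁ : ℂ → ℝ} {z : ℂ} (hb : AnalyticAt ℂ b (f z))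
    (hb' : deriv b (f z) ≠ 0) (hρ : DifferentiableAt ℝ ρ (b (f z))) (hρ0 : ρ (b (f z)) ≠ 0)
    (hρ₁ : ρ₁ =ᶠ[𝓝 (f z)] fun v => ρ (b v) * ‖deriv b v‖) (hf : ContDiffAt ℝ 2 f z) :
    rhoTension ρ (b ∘ f) z = deriv b (f z) * rhoTension ρ₁ f z := by
  have hfd : DifferentiableAt ℝ f z := hf.differentiableAt two_ne_zero
  have hbd : HasDerivAt b (deriv b (f z)) (f z) := hb.differentiableAt.hasDerivAt
  have hweight : wirtingerZ (fun w => (ρ₁ w : ℂ)) (f z) / (ρ₁ (f z) : ℂ) =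
      wirtingerZ (fun v => (ρ v : ℂ)) (b (f z)) / ρ (b (f z)) * deriv b (f z) +
        deriv (deriv b) (f z) / (2 * deriv b (f z)) := by
    rw [Filter.EventuallyEq.wirtingerZ_eq (f := fun w => (ρ₁ w : ℂ))
      (g := fun v => ((ρ (b v) * ‖deriv b v‖ : ℝ) : ℂ)) (hρ₁.fun_comp ((↑) : ℝ → ℂ)),
      hρ₁.self_of_nhds]
    exact wirtingerZ_pullback_weight_div hb hb' hρ hρ0
  unfold rhoTension
  rw [hweight, wirtingerZbar_wirtingerZ_comp hb hf, Function.comp_apply, Function.comp_def,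
    hbd.wirtingerZ_comp hfd, hbd.wirtingerZbar_comp hfd]
  field_simp
  ring

/-- Lemma 3.4(f): for a holomorphic `b : A₂ → Y` with nonvanishing
derivative, positive `C¹` weight `ρ` on `Y`, and the induced weight
`ρ₁(w) = ρ(b(w))·|b'(w)|` on `A₂`, a `C²` map `f : A₁ → A₂` is `ρ₁`-harmonic on
`A₁` if and only if `b ∘ f` is `ρ`-harmonic on `A₁`. -/
theorem stmt_15 (Y A₂ A₁ : Set ℂ) (hY : IsOpen Y) (hA₂ : IsOpen A₂) (hA₁ : IsOpen A₁)
    (b : ℂ → ℂ) (hb : DifferentiableOn ℂ b A₂) (hbmaps : Set.MapsTo b A₂ Y)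
    (hb' : ∀ w ∈ A₂, deriv b w ≠ 0)
    (ρ : ℂ → ℝ) (hρpos : ∀ w ∈ Y, 0 < ρ w) (hρ : ContDiffOn ℝ 1 ρ Y)
    (ρ₁ : ℂ → ℝ) (hρ₁ : ∀ w ∈ A₂, ρ₁ w = ρ (b w) * ‖deriv b w‖)
    (f : ℂ → ℂ) (hf : ContDiffOn ℝ 2 f A₁) (hfmaps : Set.MapsTo f A₁ A₂) :
    IsRhoHarmonicOn ρ₁ f A₁ ↔ IsRhoHarmonicOn ρ (b ∘ f) A₁ := by
  rw [isRhoHarmonicOn_iff_rhoTension, isRhoHarmonicOn_iff_rhoTension]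
  refine forall₂_congr fun z hz => ?_
  have hfz : f z ∈ A₂ := hfmaps hz
  have hbfz : b (f z) ∈ Y := hbmaps hfz
  rw [rhoTension_comp (hb.analyticOnNhd hA₂ _ hfz) (hb' _ hfz)
      ((hρ.differentiableOn one_ne_zero).differentiableAt (hY.mem_nhds hbfz))
      (hρpos _ hbfz).ne' (eventually_of_mem (hA₂.mem_nhds hfz) hρ₁)
      (hf.contDiffAt (hA₁.mem_nhds hz)),
    mul_eq_zero, or_iff_right (hb' _ hfz)]
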